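/- arXiv:2009.01425 — 2 statements merged into one kernel-verified Lean document; each statement's English description precedes it below -/
import Mathlib

section
/- If b₀ + b₁ ≥ 1, A₀ ≠ A₁ and A₀, A₁ ≥ 1, then the ghost measure μ of f (the weak limit of the μ_N) is continuous: μ({x}) = 0 for every x ∈ ℝ. -/
open MeasureTheory Filter Topology

/-- The `N`-th approximant to the ghost measure of `f`: the normalised Dirac comb built from
the values of `f` on the fundamental region `[2^N, 2^(N+1))`. -/
noncomputable def ghostApprox (f : ℕ → ℕ) (N : ℕ) : Measure ℝ :=
  (∑ n ∈ Finset.range (2 ^ N), (f (2 ^ N + n) : ENNReal))⁻¹ •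
    ∑ n ∈ Finset.range (2 ^ N), (f (2 ^ N + n) : ENNReal) • Measure.dirac ((n : ℝ) / 2 ^ N)

/-- Weak (vague) convergence of a sequence of finite measures on `ℝ`. -/
def WeakLimit (μs : ℕ → Measure ℝ) (μ : Measure ℝ) : Prop :=
  ∀ g : BoundedContinuousFunction ℝ ℝ,
    Tendsto (fun N => ∫ x, g x ∂(μs N)) atTop (𝓝 (∫ x, g x ∂μ))

/-!
Split the level `[2^N, 2^(N+1))`, `N = k + M`, into `2^k` blocks of length `2^M`. The recursion
makes each block sum affine in the value at the block's root `s`: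
`∑_{t < 2^M} f (s 2^M + t) = (A₀ + A₁)^M f s + C_M` with `C_M` independent of `s`, so
`Σ(k + M) = (A₀ + A₁)^M Σ(k) + 2^k C_M` and the ghost mass of a block is at most
`max (f s / Σ(k)) 2^(-k)`. Since `f s ≤ (f 1 + k (b₀ + b₁)) (max A₀ A₁)^k`,
`Σ(k) ≥ (A₀ + A₁)^k` and `max A₀ A₁ < A₀ + A₁`, this tends to `0` as `k → ∞`, uniformly in `M`.
A ball of radius `2^(-k)` meets at most three blocks, and testing the weak convergence against a
bump function at `x` of width `2^(-k)` bounds `μ {x}` by three times that mass.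
-/

open Finset

lemma card_le_three_of_forall_mem_Ioo {J : Finset ℕ} {z : ℝ}
    (hJ : ∀ j ∈ J, (j : ℝ) ∈ Set.Ioo (z - 2) (z + 1)) : J.card ≤ 3 := by
  have hmaps : Set.MapsTo (fun j : ℕ => (j : ℤ)) J (Icc (⌊z⌋ - 1) (⌊z⌋ + 1)) := by
    intro j hj
    obtain ⟨hlo, hhi⟩ := hJ j hj
    have h1 : ⌊z⌋ < (j : ℤ) + 2 := by
      have : (⌊z⌋ : ℝ) < j + 2 := by linarith [Int.floor_le z]
      exact_mod_cast this
    have h2 : (j : ℤ) - 1 ≤ ⌊z⌋ := Int.le_floor.mpr (by push_cast; linarith)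
    simp only [coe_Icc, Set.mem_Icc]
    omega
  calc J.card ≤ (Icc (⌊z⌋ - 1) (⌊z⌋ + 1)).card :=
        card_le_card_of_injOn _ hmaps Nat.cast_injective.injOn
    _ = 3 := by rw [Int.card_Icc]; omega

lemma card_image_div_le_three {T : ℕ} (hT : 0 < T) {y : ℝ} {s : Finset ℕ}
    (hs : ∀ n ∈ s, |(n : ℝ) - y| < T) : (s.image (· / T)).card ≤ 3 := by
  refine card_le_three_of_forall_mem_Ioo (z := y / T) ?_
  simp only [mem_image, forall_exists_index, and_imp]
  rintro _ n hn rfl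
  have hTR : (0 : ℝ) < T := by exact_mod_cast hT
  have hlo : ((n / T : ℕ) : ℝ) * T ≤ n := by exact_mod_cast Nat.div_mul_le_self n T
  have hhi : (n : ℝ) < (n / T : ℕ) * T + T := by exact_mod_cast Nat.lt_div_mul_add hT
  obtain ⟨hy₁, hy₂⟩ := abs_lt.mp (hs n hn)
  constructor
  · rw [sub_lt_iff_lt_add, div_lt_iff₀ hTR]; nlinarith
  · rw [← sub_lt_iff_lt_add, lt_div_iff₀ hTR]; nlinarith

lemma sum_le_sum_image_div (g : ℕ → ℕ) {T : ℕ} (hT : 0 < T) (s : Finset ℕ) :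
    ∑ n ∈ s, g n ≤ ∑ j ∈ s.image (· / T), ∑ t ∈ range T, g (j * T + t) := by
  rw [← sum_fiberwise_of_maps_to (fun n hn => mem_image_of_mem (· / T) hn)]
  refine sum_le_sum fun j _ => ?_
  calc ∑ n ∈ s with n / T = j, g n ≤ ∑ n ∈ Ico (j * T) (j * T + T), g n := by
        refine sum_le_sum_of_subset fun n hn => ?_
        rw [mem_filter] at hn
        rw [mem_Ico, ← hn.2]
        exact ⟨Nat.div_mul_le_self n T, Nat.lt_div_mul_add hT⟩
    _ = ∑ t ∈ range T, g (j * T + t) := by rw [sum_Ico_eq_sum_range, Nat.add_sub_cancel_left]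

lemma tendsto_add_mul_mul_pow_nhds_zero (c d : ℝ) {r : ℝ} (hr₀ : 0 ≤ r) (hr₁ : r < 1) :
    Tendsto (fun k : ℕ => (c + k * d) * r ^ k) atTop (𝓝 0) := by
  have h := ((tendsto_pow_atTop_nhds_zero_of_lt_one hr₀ hr₁).const_mul c).add
    ((tendsto_self_mul_const_pow_of_lt_one hr₀ hr₁).mul_const d)
  simp only [mul_zero, zero_mul, add_zero] at h
  exact h.congr fun k => by ring

lemma measureReal_singleton_le_of_weakLimit {μs : ℕ → Measure ℝ} {μ : Measure ℝ}
    [∀ N, IsFiniteMeasure (μs N)] [IsFiniteMeasure μ] (h : WeakLimit μs μ) {x r c : ℝ}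
    (hr : 0 < r) (hc : ∀ᶠ N in atTop, (μs N).real (Metric.ball x r) ≤ c) : μ.real {x} ≤ c := by
  let g : BoundedContinuousFunction ℝ ℝ :=
    (thickenedIndicator hr {x}).comp _ NNReal.isometry_coe.lipschitz
  have hg : ∀ y, g y = thickenedIndicator hr {x} y := fun _ => rfl
  have hlo : μ.real {x} ≤ ∫ y, g y ∂μ := by
    rw [← integral_indicator_one (measurableSet_singleton x)]
    refine integral_mono ((integrable_const 1).indicator (measurableSet_singleton x))
      (g.integrable μ) fun y => ?_
    by_cases hy : y = x
    · simp [hy, hg, thickenedIndicator_one hr {x} (Set.mem_singleton x)]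
    · simp [hy, hg]
  have hhi : ∀ N, ∫ y, g y ∂(μs N) ≤ (μs N).real (Metric.ball x r) := by
    intro N
    rw [← integral_indicator_one Metric.isOpen_ball.measurableSet]
    refine integral_mono (g.integrable _)
      ((integrable_const 1).indicator Metric.isOpen_ball.measurableSet) fun y => ?_
    by_cases hy : y ∈ Metric.ball x r
    · simpa [hy, hg] using thickenedIndicator_le_one hr {x} y
    · have : y ∉ Metric.thickening r {x} := by rwa [Metric.thickening_singleton]
      simp [hy, hg, thickenedIndicator_zero hr {x} this]
  exact hlo.trans (le_of_tendsto (h g) (hc.mono fun N hN => (hhi N).trans hN))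

def blockSum (f : ℕ → ℕ) (s M : ℕ) : ℕ := ∑ t ∈ range (2 ^ M), f (s * 2 ^ M + t)

def levelSum (f : ℕ → ℕ) (N : ℕ) : ℕ := ∑ n ∈ range (2 ^ N), f (2 ^ N + n)

lemma blockSum_one (f : ℕ → ℕ) (N : ℕ) : blockSum f 1 N = levelSum f N := by
  simp [blockSum, levelSum]

lemma blockSum_succ (f : ℕ → ℕ) (s M : ℕ) :
    blockSum f s (M + 1) = blockSum f (2 * s) M + blockSum f (2 * s + 1) M := by
  rw [blockSum, pow_succ, mul_two, sum_range_add]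
  congr 1 <;> refine sum_congr rfl fun t _ => congrArg f (by ring)

lemma blockSum_add (f : ℕ → ℕ) (k M : ℕ) :
    ∀ s, blockSum f s (k + M) = ∑ j ∈ range (2 ^ k), blockSum f (s * 2 ^ k + j) M := by
  induction k with
  | zero => simp
  | succ k ih =>
    intro s
    rw [add_right_comm, blockSum_succ, ih, ih, pow_succ, mul_two, sum_range_add]
    congr 1 <;> refine sum_congr rfl fun j _ => congrArg (blockSum f · M) (by ring)

lemma levelSum_add (f : ℕ → ℕ) (k M : ℕ) :
    levelSum f (k + M) = ∑ j ∈ range (2 ^ k), blockSum f (2 ^ k + j) M := by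
  simp [← blockSum_one, blockSum_add]

open Classical in
lemma ghostApprox_apply (f : ℕ → ℕ) (N : ℕ) (S : Set ℝ) :
    ghostApprox f N S =
      ((∑ n ∈ range (2 ^ N) with ((n : ℕ) : ℝ) / 2 ^ N ∈ S, f (2 ^ N + n) : ℕ) : ENNReal) /
        levelSum f N := by
  rw [ghostApprox, levelSum, Measure.smul_apply, Measure.finsetSum_apply, smul_eq_mul,
    ENNReal.div_eq_inv_mul, sum_filter]
  push_cast
  congr 1
  refine sum_congr rfl fun n _ => ?_
  split_ifs with h <;> simp [Measure.dirac_apply, h]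

instance isFiniteMeasure_ghostApprox (f : ℕ → ℕ) (N : ℕ) : IsFiniteMeasure (ghostApprox f N) :=
  ⟨by
    rw [ghostApprox_apply]
    simp only [Set.mem_univ, filter_true]
    exact ENNReal.div_self_le_one.trans_lt ENNReal.one_lt_top⟩

open Classical in
lemma measureReal_ghostApprox (f : ℕ → ℕ) (N : ℕ) (S : Set ℝ) :
    (ghostApprox f N).real S =
      ((∑ n ∈ range (2 ^ N) with ((n : ℕ) : ℝ) / 2 ^ N ∈ S, f (2 ^ N + n) : ℕ) : ℝ) /
        levelSum f N := by
  rw [measureReal_def, ghostApprox_apply, ENNReal.toReal_div]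
  simp only [ENNReal.toReal_natCast]

structure IsAffine2Regular (A₀ A₁ b₀ b₁ : ℕ) (f : ℕ → ℕ) : Prop where
  even : ∀ n, 1 ≤ n → f (2 * n) = A₀ * f n + b₀
  odd : ∀ n, 1 ≤ n → f (2 * n + 1) = A₁ * f n + b₁

namespace IsAffine2Regular

variable {A₀ A₁ b₀ b₁ : ℕ} {f : ℕ → ℕ}

lemma exists_blockSum_eq (hf : IsAffine2Regular A₀ A₁ b₀ b₁ f) (M : ℕ) :
    ∃ C, ∀ s, 1 ≤ s → blockSum f s M = (A₀ + A₁) ^ M * f s + C := by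
  induction M with
  | zero => exact ⟨0, fun s _ => by simp [blockSum]⟩
  | succ M ih =>
    obtain ⟨C, hC⟩ := ih
    refine ⟨(A₀ + A₁) ^ M * (b₀ + b₁) + 2 * C, fun s hs => ?_⟩
    rw [blockSum_succ, hC _ (by omega), hC _ (by omega), hf.even s hs, hf.odd s hs]
    ring

lemma pow_mul_le_levelSum (hf : IsAffine2Regular A₀ A₁ b₀ b₁ f) (N : ℕ) :
    (A₀ + A₁) ^ N * f 1 ≤ levelSum f N := by
  obtain ⟨C, hC⟩ := hf.exists_blockSum_eq N
  rw [← blockSum_one, hC 1 le_rfl]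
  exact Nat.le_add_right _ _

lemma blockSum_le_mul_levelSum (hf : IsAffine2Regular A₀ A₁ b₀ b₁ f) {s k : ℕ} {ε : ℝ}
    (hs : 1 ≤ s) (hfs : (f s : ℝ) ≤ ε * levelSum f k) (hε : 1 ≤ ε * 2 ^ k) (M : ℕ) :
    (blockSum f s M : ℝ) ≤ ε * levelSum f (k + M) := by
  obtain ⟨C, hC⟩ := hf.exists_blockSum_eq M
  have hlevel : levelSum f (k + M) = (A₀ + A₁) ^ M * levelSum f k + 2 ^ k * C := by
    rw [levelSum_add, sum_congr rfl fun j _ => hC _ (Nat.le_add_right_of_le Nat.one_le_two_pow),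
      sum_add_distrib, ← mul_sum, levelSum, sum_const, card_range, smul_eq_mul]
  rw [hC s hs, hlevel]
  push_cast
  calc ((A₀ + A₁) ^ M * f s + C : ℝ) ≤ (A₀ + A₁) ^ M * (ε * levelSum f k) + ε * 2 ^ k * C := by
        gcongr
        exact le_mul_of_one_le_left (Nat.cast_nonneg C) hε
    _ = ε * ((A₀ + A₁) ^ M * levelSum f k + 2 ^ k * C) := by ring

lemma apply_le_of_two_le (hf : IsAffine2Regular A₀ A₁ b₀ b₁ f) {m : ℕ} (hm : 2 ≤ m) :
    f m ≤ max A₀ A₁ * f (m / 2) + (b₀ + b₁) := by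
  obtain ⟨n, rfl | rfl⟩ := Nat.even_or_odd' m
  · rw [hf.even n (by omega), Nat.mul_div_cancel_left n two_pos]
    gcongr <;> omega
  · rw [hf.odd n (by omega), show (2 * n + 1) / 2 = n by omega]
    gcongr <;> omega

lemma apply_two_pow_add_le (hf : IsAffine2Regular A₀ A₁ b₀ b₁ f) (hA : 1 ≤ max A₀ A₁) (k : ℕ) :
    ∀ j < 2 ^ k, f (2 ^ k + j) ≤ (f 1 + k * (b₀ + b₁)) * max A₀ A₁ ^ k := by
  induction k with
  | zero => intro j hj; simp [show j = 0 by simpa using hj]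
  | succ k ih =>
    intro j hj
    have hdiv : (2 ^ (k + 1) + j) / 2 = 2 ^ k + j / 2 := by omega
    have hpow : 1 ≤ max A₀ A₁ ^ (k + 1) := Nat.one_le_pow _ _ hA
    calc f (2 ^ (k + 1) + j) ≤ max A₀ A₁ * f (2 ^ k + j / 2) + (b₀ + b₁) := by
          rw [← hdiv]; exact hf.apply_le_of_two_le (by omega)
      _ ≤ max A₀ A₁ * ((f 1 + k * (b₀ + b₁)) * max A₀ A₁ ^ k) +
            (b₀ + b₁) * max A₀ A₁ ^ (k + 1) := by
          gcongr
          · exact ih _ (by omega)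
          · exact Nat.le_mul_of_pos_right _ hpow
      _ = (f 1 + (k + 1) * (b₀ + b₁)) * max A₀ A₁ ^ (k + 1) := by ring

lemma apply_two_pow_add_le_mul_levelSum (hf : IsAffine2Regular A₀ A₁ b₀ b₁ f) (hf1 : 1 ≤ f 1)
    (hA : 1 ≤ max A₀ A₁) {k j : ℕ} (hj : j < 2 ^ k) :
    (f (2 ^ k + j) : ℝ) ≤
      (f 1 + k * (b₀ + b₁)) * ((max A₀ A₁ : ℕ) / (A₀ + A₁ : ℕ) : ℝ) ^ k * levelSum f k := by
  have hQ : (0 : ℝ) < (A₀ + A₁ : ℕ) := by exact_mod_cast (show 0 < A₀ + A₁ by omega)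
  have hlevel : ((A₀ + A₁ : ℕ) : ℝ) ^ k ≤ levelSum f k := by
    exact_mod_cast (Nat.le_mul_of_pos_right _ hf1).trans (hf.pow_mul_le_levelSum k)
  calc (f (2 ^ k + j) : ℝ) ≤ (f 1 + k * (b₀ + b₁)) * ((max A₀ A₁ : ℕ) : ℝ) ^ k := by
        exact_mod_cast hf.apply_two_pow_add_le hA k j hj
    _ = (f 1 + k * (b₀ + b₁)) * ((max A₀ A₁ : ℕ) / (A₀ + A₁ : ℕ) : ℝ) ^ k *
          ((A₀ + A₁ : ℕ) : ℝ) ^ k := by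
        rw [div_pow, mul_assoc, div_mul_cancel₀ _ (pow_pos hQ k).ne']
    _ ≤ _ := by gcongr

lemma measureReal_ghostApprox_ball_le (hf : IsAffine2Regular A₀ A₁ b₀ b₁ f)
    {k : ℕ} {ε : ℝ} (hfε : ∀ j < 2 ^ k, (f (2 ^ k + j) : ℝ) ≤ ε * levelSum f k)
    (hε : 1 ≤ ε * 2 ^ k) (x : ℝ) (M : ℕ) :
    (ghostApprox f (k + M)).real (Metric.ball x (2 ^ k)⁻¹) ≤ 3 * ε := by
  classical
  set s := {n ∈ range (2 ^ (k + M)) | ((n : ℕ) : ℝ) / 2 ^ (k + M) ∈ Metric.ball x (2 ^ k)⁻¹}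
  set J := s.image (· / 2 ^ M)
  have hε0 : 0 ≤ ε := (pos_of_mul_pos_left (zero_lt_one.trans_le hε) (by positivity)).le
  have hJlt : ∀ j ∈ J, j < 2 ^ k := by
    simp only [J, s, mem_image, mem_filter, mem_range]
    rintro _ ⟨n, ⟨hn, -⟩, rfl⟩
    exact Nat.div_lt_of_lt_mul (by rwa [← pow_add, add_comm])
  have hJcard : J.card ≤ 3 := by
    refine card_image_div_le_three (by positivity) (y := x * 2 ^ (k + M)) fun n hn => ?_
    have hn := (mem_filter.mp hn).2
    rw [Metric.mem_ball, Real.dist_eq] at hn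
    have h2N : (0 : ℝ) < 2 ^ (k + M) := by positivity
    calc |(n : ℝ) - x * 2 ^ (k + M)| = |((n : ℝ) / 2 ^ (k + M) - x) * 2 ^ (k + M)| := by
          congr 1; field_simp
      _ = |(n : ℝ) / 2 ^ (k + M) - x| * 2 ^ (k + M) := by rw [abs_mul, abs_of_pos h2N]
      _ < (2 ^ k)⁻¹ * 2 ^ (k + M) := by gcongr
      _ = ((2 ^ M : ℕ) : ℝ) := by rw [pow_add]; push_cast; field_simp
  have hsum : (∑ n ∈ s, f (2 ^ (k + M) + n) : ℝ) ≤ 3 * ε * levelSum f (k + M) := by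
    calc (∑ n ∈ s, f (2 ^ (k + M) + n) : ℝ)
        ≤ ∑ j ∈ J, (blockSum f (2 ^ k + j) M : ℝ) := by
          have hblocks := sum_le_sum_image_div (fun n => f (2 ^ (k + M) + n)) (pow_pos two_pos M) s
          rw [← Nat.cast_sum, ← Nat.cast_sum]
          refine Nat.cast_le.mpr (hblocks.trans_eq (sum_congr rfl fun j _ => ?_))
          exact sum_congr rfl fun t _ => congrArg f (by ring)
      _ ≤ ∑ _j ∈ J, ε * levelSum f (k + M) := by
          refine sum_le_sum fun j hj => hf.blockSum_le_mul_levelSum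
            (Nat.le_add_right_of_le Nat.one_le_two_pow) (hfε j (hJlt j hj)) hε M
      _ = J.card * (ε * levelSum f (k + M)) := by rw [sum_const, nsmul_eq_mul]
      _ ≤ 3 * ε * levelSum f (k + M) := by
          rw [mul_assoc]; gcongr; exact_mod_cast hJcard
  rw [measureReal_ghostApprox]
  push_cast
  exact div_le_of_le_mul₀ (by positivity) (by positivity) (by linarith)

end IsAffine2Regular

theorem stmt_9_general (A₀ A₁ b₀ b₁ : ℕ)
    (f : ℕ → ℕ) (hf1 : 1 ≤ f 1)
    (heven : ∀ n, 1 ≤ n → f (2 * n) = A₀ * f n + b₀)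
    (hodd : ∀ n, 1 ≤ n → f (2 * n + 1) = A₁ * f n + b₁)
    (hA0 : 1 ≤ A₀) (hA1 : 1 ≤ A₁)
    (μ : Measure ℝ) (hμ : IsProbabilityMeasure μ)
    (hlim : WeakLimit (ghostApprox f) μ) :
    ∀ x : ℝ, μ {x} = 0 := by
  intro x
  have hf : IsAffine2Regular A₀ A₁ b₀ b₁ f := ⟨heven, hodd⟩
  have hA : 1 ≤ max A₀ A₁ := le_max_of_le_left hA0
  set r : ℝ := (max A₀ A₁ : ℕ) / (A₀ + A₁ : ℕ)
  have hr : r < 1 := (div_lt_one (by positivity)).mpr (by exact_mod_cast (by omega))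
  set ε : ℕ → ℝ := fun k => (f 1 + k * (b₀ + b₁)) * r ^ k + 2⁻¹ ^ k
  have hatom (k : ℕ) : μ.real {x} ≤ 3 * ε k := by
    refine measureReal_singleton_le_of_weakLimit hlim (r := (2 ^ k)⁻¹) (by positivity)
      ((eventually_ge_atTop k).mono fun N hN => ?_)
    obtain ⟨M, rfl⟩ := Nat.exists_eq_add_of_le hN
    refine hf.measureReal_ghostApprox_ball_le (fun j hj => ?_) ?_ x M
    · refine (hf.apply_two_pow_add_le_mul_levelSum hf1 hA hj).trans ?_
      gcongr
      exact le_add_of_nonneg_right (by positivity)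
    · calc (1 : ℝ) = 2⁻¹ ^ k * 2 ^ k := by rw [← mul_pow]; norm_num
        _ ≤ ε k * 2 ^ k := by gcongr; exact le_add_of_nonneg_left (by positivity)
  have hε : Tendsto (fun k => 3 * ε k) atTop (𝓝 0) := by
    simpa using ((tendsto_add_mul_mul_pow_nhds_zero _ _ (by positivity) hr).add
      (tendsto_pow_atTop_nhds_zero_of_lt_one (by norm_num) (by norm_num))).const_mul 3
  exact (measureReal_eq_zero_iff).mp (le_antisymm (ge_of_tendsto' hε hatom) measureReal_nonneg)

theorem stmt_9 (A₀ A₁ b₀ b₁ : ℕ) (hnz : ¬(A₀ = 0 ∧ A₁ = 0 ∧ b₀ = 0 ∧ b₁ = 0))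
    (f : ℕ → ℕ) (hf1 : 1 ≤ f 1)
    (heven : ∀ n, 1 ≤ n → f (2 * n) = A₀ * f n + b₀)
    (hodd : ∀ n, 1 ≤ n → f (2 * n + 1) = A₁ * f n + b₁)
    (hb : 1 ≤ b₀ + b₁) (hAne : A₀ ≠ A₁) (hA0 : 1 ≤ A₀) (hA1 : 1 ≤ A₁)
    (μ : Measure ℝ) (hμ : IsProbabilityMeasure μ)
    (hlim : WeakLimit (ghostApprox f) μ) :
    ∀ x : ℝ, μ {x} = 0 :=
  stmt_9_general A₀ A₁ b₀ b₁ f hf1 heven hodd hA0 hA1 μ hμ hlim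
end

section
/- Assume b₀ = b₁ = 0 and A₀, A₁ ≥ 1 with A₀ ≠ A₁, and let μ be the ghost measure of f. Then for every integer t, ∫ e^{−2πitx} dμ(x) = ∏_{n=1}^∞ (A₀ + A₁·e^{−2πit/2^n}) / (A₀ + A₁), where the infinite product converges. -/
open MeasureTheory Filter Topology

/-! With `b₀ = b₁ = 0`, splitting the block sum `∑_{n < 2^N} f (2^N + n) z^n` according to the
last binary digit of `n` gives the Riesz-type factorisation
`f 1 · ∏_{j < N} (A₀ + A₁ z^(2^j))`. At `z = e^{-2πit/2^N}`, divided by the block mass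
`f 1 · (A₀ + A₁)^N`, this says that the `t`-th Fourier coefficient of the `N`-th approximant is
exactly the `N`-th partial product. The factors are `1 + O(2^{-n})`, so the product converges,
and since `x ↦ e^{-2πitx}` is bounded and continuous, weak convergence identifies the limit of
the partial products with `μ̂(t)`. -/

open Finset Complex

section TwoRegular

theorem sum_range_two_mul {M : Type*} [AddCommMonoid M] (g : ℕ → M) (m : ℕ) :
    ∑ n ∈ range (2 * m), g n = ∑ k ∈ range m, (g (2 * k) + g (2 * k + 1)) := by
  induction m with
  | zero => simp
  | succ m ih => rw [mul_add_one, sum_range_succ, sum_range_succ, ih, sum_range_succ, add_assoc]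

variable {R : Type*} [CommSemiring R] {A₀ A₁ : R} {f : ℕ → R}

theorem sum_range_two_pow_mul_pow_eq_prod (heven : ∀ n, 1 ≤ n → f (2 * n) = A₀ * f n)
    (hodd : ∀ n, 1 ≤ n → f (2 * n + 1) = A₁ * f n) {ζ : ℕ → R}
    (hζ : ∀ j, ζ (j + 1) ^ 2 = ζ j) (N : ℕ) :
    ∑ n ∈ range (2 ^ N), f (2 ^ N + n) * ζ N ^ n =
      f 1 * ∏ j ∈ range N, (A₀ + A₁ * ζ (j + 1)) := by
  induction N with
  | zero => simp
  | succ N ih =>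
    have hsplit : ∀ k ∈ range (2 ^ N),
        f (2 * 2 ^ N + 2 * k) * ζ (N + 1) ^ (2 * k) +
            f (2 * 2 ^ N + (2 * k + 1)) * ζ (N + 1) ^ (2 * k + 1) =
          (A₀ + A₁ * ζ (N + 1)) * (f (2 ^ N + k) * ζ N ^ k) := by
      intro k _
      have hk : 1 ≤ 2 ^ N + k := Nat.one_le_two_pow.trans (Nat.le_add_right _ _)
      rw [show 2 * 2 ^ N + 2 * k = 2 * (2 ^ N + k) by ring,
        show 2 * 2 ^ N + (2 * k + 1) = 2 * (2 ^ N + k) + 1 by ring,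
        heven _ hk, hodd _ hk, ← hζ N]
      ring
    rw [pow_succ' 2 N, sum_range_two_mul, sum_congr rfl hsplit, ← mul_sum, ih,
      prod_range_succ]
    ring

theorem sum_range_two_pow_eq (heven : ∀ n, 1 ≤ n → f (2 * n) = A₀ * f n)
    (hodd : ∀ n, 1 ≤ n → f (2 * n + 1) = A₁ * f n) (N : ℕ) :
    ∑ n ∈ range (2 ^ N), f (2 ^ N + n) = f 1 * (A₀ + A₁) ^ N := by
  simpa using sum_range_two_pow_mul_pow_eq_prod heven hodd (ζ := fun _ ↦ 1) (fun _ ↦ one_pow 2) N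

end TwoRegular

theorem integral_ghostApprox {E : Type*} [NormedAddCommGroup E] [NormedSpace ℝ E]
    [CompleteSpace E] (f : ℕ → ℕ) (N : ℕ) (g : ℝ → E) :
    ∫ x, g x ∂ghostApprox f N =
      (∑ n ∈ range (2 ^ N), (f (2 ^ N + n) : ℝ))⁻¹ •
        ∑ n ∈ range (2 ^ N), (f (2 ^ N + n) : ℝ) • g (n / 2 ^ N) := by
  rw [ghostApprox, integral_smul_measure, integral_finsetSum_measure fun n _ ↦
    (integrable_dirac enorm_lt_top).smul_measure (ENNReal.natCast_ne_top _)]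
  simp [integral_smul_measure, integral_dirac, ENNReal.toReal_inv, ENNReal.toReal_sum]

theorem isProbabilityMeasure_ghostApprox {f : ℕ → ℕ} {N : ℕ}
    (h : ∑ n ∈ range (2 ^ N), f (2 ^ N + n) ≠ 0) : IsProbabilityMeasure (ghostApprox f N) := by
  constructor
  simp only [ghostApprox, Measure.smul_apply, Measure.coe_finsetSum, Finset.sum_apply,
    measure_univ, smul_eq_mul, mul_one]
  exact ENNReal.inv_mul_cancel (by exact_mod_cast h) (by simp)

theorem integral_cexp_ghostApprox {A₀ A₁ : ℕ} {f : ℕ → ℕ}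
    (heven : ∀ n, 1 ≤ n → f (2 * n) = A₀ * f n) (hodd : ∀ n, 1 ≤ n → f (2 * n + 1) = A₁ * f n)
    (hf1 : f 1 ≠ 0) (c : ℂ) (N : ℕ) :
    ∫ x, cexp (c * x) ∂ghostApprox f N =
      ∏ j ∈ range N, ((A₀ : ℂ) + A₁ * cexp (c / 2 ^ (j + 1))) / (A₀ + A₁) := by
  have heven' : ∀ n, 1 ≤ n → (f (2 * n) : ℂ) = A₀ * f n := fun n hn ↦ by
    exact_mod_cast heven n hn
  have hodd' : ∀ n, 1 ≤ n → (f (2 * n + 1) : ℂ) = A₁ * f n := fun n hn ↦ by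
    exact_mod_cast hodd n hn
  have hζ : ∀ j : ℕ, cexp (c / 2 ^ (j + 1)) ^ 2 = cexp (c / 2 ^ j) := fun j ↦ by
    rw [← Complex.exp_nat_mul]
    ring_nf
  have hexp : ∀ n : ℕ, cexp (c * ((n / 2 ^ N : ℝ) : ℂ)) = cexp (c / 2 ^ N) ^ n := fun n ↦ by
    rw [← Complex.exp_nat_mul]
    push_cast
    ring_nf
  simp only [integral_ghostApprox, Complex.real_smul, hexp]
  push_cast
  rw [sum_range_two_pow_eq (f := fun n ↦ (f n : ℂ)) heven' hodd',
    sum_range_two_pow_mul_pow_eq_prod (f := fun n ↦ (f n : ℂ)) heven' hodd'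
      (ζ := fun j ↦ cexp (c / 2 ^ j)) hζ,
    prod_div_distrib, prod_const, card_range, mul_inv_rev, mul_assoc,
    inv_mul_cancel_left₀ (by exact_mod_cast hf1), div_eq_inv_mul]

theorem WeakLimit.tendsto_integral_rclike {𝕜 : Type*} [RCLike 𝕜] {μs : ℕ → Measure ℝ}
    {μ : Measure ℝ} [∀ N, IsFiniteMeasure (μs N)] [IsFiniteMeasure μ] (h : WeakLimit μs μ)
    (g : BoundedContinuousFunction ℝ 𝕜) :
    Tendsto (fun N ↦ ∫ x, g x ∂μs N) atTop (𝓝 (∫ x, g x ∂μ)) :=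
  (FiniteMeasure.tendsto_iff_forall_integral_rclike_tendsto 𝕜
    (μs := fun N ↦ ⟨μs N, inferInstance⟩) (μ := ⟨μ, inferInstance⟩)).1
      (FiniteMeasure.tendsto_iff_forall_integral_tendsto.2 h) g

theorem WeakLimit.tendsto_integral_cexp {μs : ℕ → Measure ℝ} {μ : Measure ℝ}
    [∀ N, IsFiniteMeasure (μs N)] [IsFiniteMeasure μ] (h : WeakLimit μs μ) {c : ℂ}
    (hc : c.re = 0) :
    Tendsto (fun N ↦ ∫ x, cexp (c * x) ∂μs N) atTop (𝓝 (∫ x, cexp (c * x) ∂μ)) :=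
  h.tendsto_integral_rclike <| .ofNormedAddCommGroup (fun x : ℝ ↦ cexp (c * x)) (by fun_prop) 1
    fun x ↦ by simp [Complex.norm_exp, hc]

theorem summable_cexp_div_two_pow_succ_sub_one (c : ℂ) :
    Summable fun n : ℕ ↦ cexp (c / 2 ^ (n + 1)) - 1 := by
  have hgeom : Summable fun n : ℕ ↦ c / 2 ^ (n + 1) :=
    ((summable_geometric_of_norm_lt_one (show ‖(2⁻¹ : ℂ)‖ < 1 by norm_num)).mul_left
      (c / 2)).congr fun n ↦ by rw [inv_pow, pow_succ]; ring
  refine (hgeom.norm.mul_left 2).of_norm_bounded_eventually ?_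
  filter_upwards [hgeom.norm.tendsto_cofinite_zero.eventually_le_const one_pos] with n hn
  exact norm_exp_sub_one_le hn

theorem multipliable_add_mul_cexp_div_two_pow_div (a b c : ℂ) (hab : a + b ≠ 0) :
    Multipliable fun n : ℕ ↦ (a + b * cexp (c / 2 ^ (n + 1))) / (a + b) := by
  have h : ∀ n : ℕ, (a + b * cexp (c / 2 ^ (n + 1))) / (a + b) =
      1 + b / (a + b) * (cexp (c / 2 ^ (n + 1)) - 1) := fun n ↦ by
    field_simp
    ring
  simp_rw [h]
  exact Complex.multipliable_one_add_of_summable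
    ((summable_cexp_div_two_pow_succ_sub_one c).mul_left _)

theorem stmt_16_general (A₀ A₁ b₀ b₁ : ℕ)
    (f : ℕ → ℕ) (hf1 : 1 ≤ f 1)
    (heven : ∀ n, 1 ≤ n → f (2 * n) = A₀ * f n + b₀)
    (hodd : ∀ n, 1 ≤ n → f (2 * n + 1) = A₁ * f n + b₁)
    (hb₀ : b₀ = 0) (hb₁ : b₁ = 0) (hA0 : 1 ≤ A₀)
    (μ : Measure ℝ) (hμ : IsProbabilityMeasure μ)
    (hlim : WeakLimit (ghostApprox f) μ) :
    ∀ t : ℤ,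
      Multipliable (fun n : ℕ =>
        ((A₀ : ℂ) + (A₁ : ℂ) *
            Complex.exp (-2 * (Real.pi : ℂ) * Complex.I * (t : ℂ) / 2 ^ (n + 1))) /
          ((A₀ : ℂ) + (A₁ : ℂ))) ∧
      ∫ x, Complex.exp (-2 * (Real.pi : ℂ) * Complex.I * (t : ℂ) * (x : ℂ)) ∂μ =
        ∏' n : ℕ,
          ((A₀ : ℂ) + (A₁ : ℂ) *
              Complex.exp (-2 * (Real.pi : ℂ) * Complex.I * (t : ℂ) / 2 ^ (n + 1))) /
            ((A₀ : ℂ) + (A₁ : ℂ)) := by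
  subst hb₀ hb₁
  simp only [add_zero] at heven hodd
  have hf1 := Nat.one_le_iff_ne_zero.mp hf1
  have hA : (A₀ : ℂ) + A₁ ≠ 0 := by exact_mod_cast (by omega : A₀ + A₁ ≠ 0)
  have (N : ℕ) : IsProbabilityMeasure (ghostApprox f N) :=
    isProbabilityMeasure_ghostApprox <| by
      rw [sum_range_two_pow_eq heven hodd]
      exact mul_ne_zero hf1 (pow_ne_zero _ (by omega))
  intro t
  set c : ℂ := -2 * Real.pi * I * t
  have hmult := multipliable_add_mul_cexp_div_two_pow_div A₀ A₁ c hA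
  refine ⟨hmult, tendsto_nhds_unique ?_ hmult.hasProd.tendsto_prod_nat⟩
  simpa only [integral_cexp_ghostApprox heven hodd hf1] using
    hlim.tendsto_integral_cexp (c := c) (by simp [c])

theorem stmt_16 (A₀ A₁ b₀ b₁ : ℕ) (hnz : ¬(A₀ = 0 ∧ A₁ = 0 ∧ b₀ = 0 ∧ b₁ = 0))
    (f : ℕ → ℕ) (hf1 : 1 ≤ f 1)
    (heven : ∀ n, 1 ≤ n → f (2 * n) = A₀ * f n + b₀)
    (hodd : ∀ n, 1 ≤ n → f (2 * n + 1) = A₁ * f n + b₁)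
    (hb₀ : b₀ = 0) (hb₁ : b₁ = 0) (hAne : A₀ ≠ A₁) (hA0 : 1 ≤ A₀) (hA1 : 1 ≤ A₁)
    (μ : Measure ℝ) (hμ : IsProbabilityMeasure μ)
    (hlim : WeakLimit (ghostApprox f) μ) :
    ∀ t : ℤ,
      Multipliable (fun n : ℕ =>
        ((A₀ : ℂ) + (A₁ : ℂ) *
            Complex.exp (-2 * (Real.pi : ℂ) * Complex.I * (t : ℂ) / 2 ^ (n + 1))) /
          ((A₀ : ℂ) + (A₁ : ℂ))) ∧
      ∫ x, Complex.exp (-2 * (Real.pi : ℂ) * Complex.I * (t : ℂ) * (x : ℂ)) ∂μ =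
        ∏' n : ℕ,
          ((A₀ : ℂ) + (A₁ : ℂ) *
              Complex.exp (-2 * (Real.pi : ℂ) * Complex.I * (t : ℂ) / 2 ^ (n + 1))) /
            ((A₀ : ℂ) + (A₁ : ℂ)) :=
  stmt_16_general A₀ A₁ b₀ b₁ f hf1 heven hodd hb₀ hb₁ hA0 μ hμ hlim
end
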